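/- arXiv:2301.11071 — 5 statements merged into one kernel-verified Lean document; each statement's English description precedes it below -/
import Mathlib

section
/- Let f : ℝ^n × ℝ^n → ℝ^m be a bifunction, C ⊆ ℝ^m a nontrivial closed convex pointed cone, K ⊆ ℝ^n nonempty and closed, and let x̄ ∈ Equi be a solution of the strong vector equilibrium problem. Suppose that (i) f is B-differentiable at x̄ uniformly on K, with family of B-derivatives {D_Bf(x̄,z) : z ∈ K}, and (ii) a local error bound is valid near x̄, i.e. there exist κ, δ > 0 such that dist(x, Equi) ≤ κ·ν(x) for all x ∈ B(x̄,δ) ∩ K. Then ⋂_{z∈K} (D_Bf(x̄,z))⁻¹(C) ∩ W(x̄,K) ⊆ T(x̄,Equi), where W(x̄,K) is the cone of radial directions to K at x̄ and T(x̄,Equi) is the contingent cone to Equi at x̄. -/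
open Filter Metric Set Pointwise
open scoped InnerProductSpace Topology

noncomputable section

/-- `ℝ^d` as a Euclidean space. -/
abbrev Euc (d : ℕ) := EuclideanSpace ℝ (Fin d)

/-- The contingent (Bouligand tangent) cone to `S` at `x`:
`T(x,S) = {v : ∃ vₙ → v, tₙ ↓ 0, x + tₙ vₙ ∈ S for all n}`. -/
def contCone {d : ℕ} (S : Set (Euc d)) (x : Euc d) : Set (Euc d) :=
  {v | ∃ (vs : ℕ → Euc d) (ts : ℕ → ℝ),
    Filter.Tendsto vs Filter.atTop (𝓝 v) ∧ Filter.Tendsto ts Filter.atTop (𝓝 0) ∧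
    (∀ k, 0 < ts k) ∧ ∀ k, x + ts k • vs k ∈ S}

/-- The cone of radial (weak feasible) directions to `S` at `x`:
`W(x,S) = {v : ∀ ε > 0, ∃ t ∈ (0,ε), x + t v ∈ S}`. -/
def radialCone {d : ℕ} (S : Set (Euc d)) (x : Euc d) : Set (Euc d) :=
  {v | ∀ ε > (0:ℝ), ∃ t : ℝ, 0 < t ∧ t < ε ∧ x + t • v ∈ S}

/-- The set of strong vector equilibria: `Equi = {x ∈ K : f(x,z) ∈ C for all z ∈ K}`. -/
def Equi {n m : ℕ} (f : Euc n → Euc n → Euc m) (C : Set (Euc m)) (K : Set (Euc n)) :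
    Set (Euc n) :=
  {x ∈ K | ∀ z ∈ K, f x z ∈ C}

/-- The negative dual (polar) cone `S° = {v : ⟪v,s⟫ ≤ 0 for all s ∈ S}`. -/
def negDualCone {d : ℕ} (S : Set (Euc d)) : Set (Euc d) :=
  {v | ∀ s ∈ S, ⟪v, s⟫_ℝ ≤ 0}

/-- The normal cone of convex analysis `N(x,S) = {v : ⟪v, y - x⟫ ≤ 0 for all y ∈ S}`. -/
def normalCone {d : ℕ} (S : Set (Euc d)) (x : Euc d) : Set (Euc d) :=
  {v | ∀ y ∈ S, ⟪v, y - x⟫_ℝ ≤ 0}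

/-!
Take a radial direction `v` with `D_Bf(x̄,z) v ∈ C` for all `z ∈ K`, and points `x = x̄ + t v ∈ K`
with `t ↓ 0`. Since `f(x̄,z) + t D_Bf(x̄,z) v` lies in the convex cone `C`, uniform
B-differentiability gives `ν(x) ≤ ε t ‖v‖` for small `t`, and the error bound then produces a point
of `Equi` at distance `o(t)` from `x̄ + t v`; this is exactly the contingent-cone condition.
-/

theorem Convex.add_mem_of_smul_mem {E : Type*} [AddCommGroup E] [Module ℝ E] {C : Set E}
    (hconv : Convex ℝ C) (hcone : ∀ c ∈ C, ∀ t : ℝ, 0 < t → t • c ∈ C)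
    {a b : E} (ha : a ∈ C) (hb : b ∈ C) : a + b ∈ C := by
  have hmid : (1 / 2 : ℝ) • a + (1 / 2 : ℝ) • b ∈ C :=
    hconv ha hb (by norm_num) (by norm_num) (by norm_num)
  simpa [smul_add, smul_smul] using hcone _ hmid 2 two_pos

theorem mem_contCone_of_forall_exists_dist_lt {d : ℕ} {S : Set (Euc d)} {x v : Euc d}
    (h : ∀ ε > (0 : ℝ), ∃ t : ℝ, 0 < t ∧ t < ε ∧ ∃ y ∈ S, dist (x + t • v) y < ε * t) :
    v ∈ contCone S x := by
  choose ts hts_pos hts_lt ys hys hdist using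
    fun k : ℕ => h (1 / (k + 1)) Nat.one_div_pos_of_nat
  have hdist_v : ∀ k, dist ((ts k)⁻¹ • (ys k - x)) v < 1 / (k + 1) := by
    intro k
    have hne : ts k ≠ 0 := (hts_pos k).ne'
    calc dist ((ts k)⁻¹ • (ys k - x)) v
        = (ts k)⁻¹ * dist (x + ts k • v) (ys k) := by
          have hdiff : (ts k)⁻¹ • (ys k - x) - v = (ts k)⁻¹ • (ys k - (x + ts k • v)) := by
            rw [smul_sub, smul_sub, smul_add, inv_smul_smul₀ hne]; abel
          rw [dist_eq_norm, hdiff, norm_smul_of_nonneg (inv_pos.2 (hts_pos k)).le, dist_comm,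
            dist_eq_norm]
      _ < (ts k)⁻¹ * (1 / (k + 1) * ts k) := by gcongr; exacts [inv_pos.2 (hts_pos k), hdist k]
      _ = 1 / (k + 1) := by field_simp
  refine ⟨fun k => (ts k)⁻¹ • (ys k - x), ts, ?_, ?_, hts_pos, fun k => ?_⟩
  · exact tendsto_iff_dist_tendsto_zero.2 <| squeeze_zero (fun _ => dist_nonneg)
      (fun k => (hdist_v k).le) tendsto_one_div_add_atTop_nhds_zero_nat
  · exact squeeze_zero (fun k => (hts_pos k).le) (fun k => (hts_lt k).le)
      tendsto_one_div_add_atTop_nhds_zero_nat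
  · simpa [smul_inv_smul₀ (hts_pos k).ne'] using hys k

theorem exists_mem_ball_of_mem_radialCone {d : ℕ} {S : Set (Euc d)} {x v : Euc d}
    (hv : v ∈ radialCone S x) {ε δ : ℝ} (hε : 0 < ε) (hδ : 0 < δ) :
    ∃ t : ℝ, 0 < t ∧ t < ε ∧ x + t • v ∈ S ∩ ball x δ := by
  obtain ⟨t, ht_pos, ht_lt, htS⟩ := hv (min ε (δ / (‖v‖ + 1))) (lt_min hε (by positivity))
  refine ⟨t, ht_pos, ht_lt.trans_le (min_le_left _ _), htS, ?_⟩
  have ht_δ : t * (‖v‖ + 1) < δ :=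
    (lt_div_iff₀ (by positivity)).1 (ht_lt.trans_le (min_le_right _ _))
  rw [mem_ball, dist_self_add_left, norm_smul_of_nonneg ht_pos.le]
  nlinarith

theorem inner_approximation_general {n m : ℕ}
    (f : Euc n → Euc n → Euc m) (C : Set (Euc m)) (K : Set (Euc n))
    (hCconvex : Convex ℝ C)
    (hCcone : ∀ c ∈ C, ∀ t : ℝ, 0 < t → t • c ∈ C)
    (xb : Euc n) (hxb : xb ∈ Equi f C K)
    (D : Euc n → Euc n → Euc m)
    (hDph : ∀ z ∈ K, ∀ t : ℝ, 0 < t → ∀ v, D z (t • v) = t • D z v)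
    (hBdiff : ∀ ε > (0:ℝ), ∃ δ > (0:ℝ), ∀ x ∈ ball xb δ, ∀ z ∈ K,
      ‖f x z - f xb z - D z (x - xb)‖ ≤ ε * ‖x - xb‖)
    (hErr : ∃ κ > (0:ℝ), ∃ δ > (0:ℝ), ∀ x ∈ ball xb δ ∩ K, ∀ r : ℝ,
      (∀ z ∈ K, infDist (f x z) C ≤ r) → infDist x (Equi f C K) ≤ κ * r)
 :
    (⋂ z ∈ K, D z ⁻¹' C) ∩ radialCone K xb ⊆ contCone (Equi f C K) xb := by
  obtain ⟨κ, hκ, δE, hδE, herr⟩ := hErr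
  rintro v ⟨hvD, hvK⟩
  refine mem_contCone_of_forall_exists_dist_lt fun ε hε => ?_
  -- `η` is the B-differentiability tolerance that makes `κ η ‖v‖ < ε`.
  set η := ε / (κ * ‖v‖ + 1)
  obtain ⟨δB, hδB, hB⟩ := hBdiff η (by positivity)
  obtain ⟨t, ht_pos, ht_lt, hxK, hx_ball⟩ :=
    exists_mem_ball_of_mem_radialCone hvK hε (lt_min hδB hδE)
  have hstep : ‖(xb + t • v) - xb‖ = t * ‖v‖ := by
    rw [add_sub_cancel_left, norm_smul_of_nonneg ht_pos.le]
  have hres : ∀ z ∈ K, infDist (f (xb + t • v) z) C ≤ η * (t * ‖v‖) := by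
    intro z hz
    have hmem : f xb z + t • D z v ∈ C :=
      hCconvex.add_mem_of_smul_mem hCcone (hxb.2 z hz)
        (hCcone _ (mem_iInter₂.1 hvD z hz) t ht_pos)
    calc infDist (f (xb + t • v) z) C
        ≤ ‖f (xb + t • v) z - f xb z - D z ((xb + t • v) - xb)‖ := by
          rw [add_sub_cancel_left, hDph z hz t ht_pos, sub_sub, ← dist_eq_norm]
          exact infDist_le_dist_of_mem hmem
      _ ≤ η * (t * ‖v‖) := hstep ▸ hB _ (ball_subset_ball (min_le_left _ _) hx_ball) z hz
  have hdist : infDist (xb + t • v) (Equi f C K) < ε * t :=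
    calc infDist (xb + t • v) (Equi f C K)
        ≤ κ * (η * (t * ‖v‖)) :=
          herr _ ⟨ball_subset_ball (min_le_right _ _) hx_ball, hxK⟩ _ hres
      _ < ε * t := by
          rw [← mul_assoc, ← mul_assoc, mul_div_assoc', div_mul_eq_mul_div,
            div_mul_eq_mul_div, div_lt_iff₀ (by positivity)]
          nlinarith [mul_pos hε ht_pos]
  obtain ⟨y, hy, hdy⟩ := (infDist_lt_iff ⟨xb, hxb⟩).1 hdist
  exact ⟨t, ht_pos, ht_lt, y, hy, hdy⟩

/-- **Inner approximation** (Theorem 3.1): under uniform B-differentiability and a local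
error bound, `⋂_{z∈K} (D_Bf(xb,z))⁻¹(C) ∩ W(xb,K) ⊆ T(xb,Equi)`. -/
theorem inner_approximation {n m : ℕ}
    (f : Euc n → Euc n → Euc m) (C : Set (Euc m)) (K : Set (Euc n))
    (hCclosed : IsClosed C) (hCconvex : Convex ℝ C)
    (hCzero : (0 : Euc m) ∈ C)
    (hCcone : ∀ c ∈ C, ∀ t : ℝ, 0 < t → t • c ∈ C)
    (hCpointed : ∀ c ∈ C, -c ∈ C → c = 0)
    (hCnontrivial : ∃ c ∈ C, c ≠ 0)
    (hKne : K.Nonempty) (hKclosed : IsClosed K)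
    (xb : Euc n) (hxb : xb ∈ Equi f C K)
    (D : Euc n → Euc n → Euc m)
    (hDcont : ∀ z ∈ K, Continuous (D z))
    (hDph : ∀ z ∈ K, ∀ t : ℝ, 0 < t → ∀ v, D z (t • v) = t • D z v)
    (hBdiff : ∀ ε > (0:ℝ), ∃ δ > (0:ℝ), ∀ x ∈ ball xb δ, ∀ z ∈ K,
      ‖f x z - f xb z - D z (x - xb)‖ ≤ ε * ‖x - xb‖)
    (hErr : ∃ κ > (0:ℝ), ∃ δ > (0:ℝ), ∀ x ∈ ball xb δ ∩ K, ∀ r : ℝ,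
      (∀ z ∈ K, infDist (f x z) C ≤ r) → infDist x (Equi f C K) ≤ κ * r)
 :
    (⋂ z ∈ K, D z ⁻¹' C) ∩ radialCone K xb ⊆ contCone (Equi f C K) xb :=
  inner_approximation_general f C K hCconvex hCcone xb hxb D hDph hBdiff hErr
end
end

section
/- Let f : ℝ^n × ℝ^n → ℝ^m be a bifunction, C ⊆ ℝ^m a nontrivial closed convex pointed cone, K ⊆ ℝ^n nonempty and closed, and let x̄ ∈ Equi. Suppose that (i) K is polyhedral (a finite intersection of closed affine half-spaces), (ii) f(x̄,z) = 0 for all z ∈ K, (iii) f is strictly B-differentiable at x̄ uniformly on K with family {D_Bf(x̄,z) : z ∈ K}, (iv) the family {D_Bf(x̄,z) : z ∈ K} is equicontinuous at each point of ℝ^n, and (v) a local error bound is valid near x̄, i.e. there exist κ, δ > 0 such that dist(x,Equi) ≤ κ·ν(x) for all x ∈ B(x̄,δ) ∩ K. Then T(x̄,Equi) = ⋂_{z∈K} (D_Bf(x̄,z))⁻¹(C) ∩ T(x̄,K). -/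
open Filter Metric Set Pointwise
open scoped InnerProductSpace Topology

noncomputable section

/-- A polyhedral set: a finite intersection of closed affine half-spaces. -/
def IsPolyhedral {d : ℕ} (S : Set (Euc d)) : Prop :=
  ∃ I : Finset (Euc d × ℝ), S = ⋂ p ∈ I, {x : Euc d | ⟪p.1, x⟫_ℝ ≤ p.2}

/-!
If `x̄ + tₖvₖ ∈ Equi` with `tₖ ↓ 0` and `vₖ → v`, then `tₖ⁻¹ f(x̄ + tₖvₖ, z) ∈ C` converges to
`D_Bf(x̄,z) v`, because `f(x̄,z) = 0`; as `C` is closed, `D_Bf(x̄,z) v ∈ C`.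

Conversely, a tangent direction `v` to a polyhedral `K` is feasible: `x̄ + tv ∈ K` for all small
`t > 0`. If also `D_Bf(x̄,z) v ∈ C` for every `z`, the point `t D_Bf(x̄,z) v ∈ C` lies within
`o(t)` of `f(x̄ + tv, z)`, uniformly in `z`, so the residual `ν(x̄ + tv)` is `o(t)`. The error
bound turns this into `dist(x̄ + tv, Equi) = o(t)`, which makes `v` tangent to `Equi`.
-/

def HasUniformBDerivAt {E F ι : Type*} [NormedAddCommGroup E] [NormedAddCommGroup F]
    (f : E → ι → F) (D : ι → E → F) (s : Set ι) (x : E) : Prop :=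
  ∀ ε > (0:ℝ), ∃ δ > (0:ℝ), ∀ y ∈ ball x δ, ∀ z ∈ s,
    ‖f y z - f x z - D z (y - x)‖ ≤ ε * ‖y - x‖

section BDeriv

variable {E F ι : Type*} [NormedAddCommGroup E] [NormedAddCommGroup F]
  {f : E → ι → F} {D : ι → E → F} {s : Set ι} {x : E}

theorem hasUniformBDerivAt_of_strict
    (h : ∀ ε > (0:ℝ), ∃ δ > (0:ℝ), ∀ x₁ ∈ ball x δ, ∀ x₂ ∈ ball x δ, ∀ z ∈ s,
      ‖f x₁ z - f x₂ z - D z (x₁ - x₂)‖ ≤ ε * ‖x₁ - x₂‖) :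
    HasUniformBDerivAt f D s x := fun ε hε =>
  let ⟨δ, hδ, hδε⟩ := h ε hε
  ⟨δ, hδ, fun y hy z hz => hδε y hy x (mem_ball_self hδ) z hz⟩

namespace HasUniformBDerivAt

variable [NormedSpace ℝ E] [NormedSpace ℝ F]
  (hf : HasUniformBDerivAt f D s x) (hzero : ∀ z ∈ s, f x z = 0)
  (hD : ∀ z ∈ s, ∀ t : ℝ, 0 < t → ∀ v, D z (t • v) = t • D z v)
include hf hzero hD

theorem norm_sub_smul_le {ε : ℝ} (hε : 0 < ε) :
    ∃ δ > (0:ℝ), ∀ t : ℝ, 0 < t → ∀ w : E, t * ‖w‖ < δ → ∀ z ∈ s,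
      ‖f (x + t • w) z - t • D z w‖ ≤ ε * (t * ‖w‖) := by
  obtain ⟨δ, hδ, hδε⟩ := hf ε hε
  refine ⟨δ, hδ, fun t ht w htw z hz => ?_⟩
  have hnorm : ‖t • w‖ = t * ‖w‖ := norm_smul_of_nonneg ht.le w
  have hy : x + t • w ∈ ball x δ := by
    rwa [mem_ball, dist_eq_norm, add_sub_cancel_left, hnorm]
  simpa [hzero z hz, hD z hz t ht, hnorm] using hδε _ hy z hz

theorem tendsto_inv_smul {z : ι} (hz : z ∈ s) (hDz : Continuous (D z))
    {vs : ℕ → E} {ts : ℕ → ℝ} {v : E} (hvs : Tendsto vs atTop (𝓝 v))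
    (hts : Tendsto ts atTop (𝓝 0)) (htpos : ∀ k, 0 < ts k) :
    Tendsto (fun k => (ts k)⁻¹ • f (x + ts k • vs k) z) atTop (𝓝 (D z v)) := by
  have hquot : Tendsto (fun k => (ts k)⁻¹ • f (x + ts k • vs k) z - D z (vs k)) atTop
      (𝓝 0) := by
    refine Metric.tendsto_nhds.2 fun ε hε => ?_
    obtain ⟨δ, hδ, hest⟩ := hf.norm_sub_smul_le hzero hD (ε := ε / (‖v‖ + 1)) (by positivity)
    have hsmall : Tendsto (fun k => ts k * ‖vs k‖) atTop (𝓝 0) := by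
      simpa using hts.mul hvs.norm
    filter_upwards [hsmall.eventually_lt_const hδ,
      hvs.norm.eventually_lt_const (lt_add_one ‖v‖)] with k hk hvk
    have ht := htpos k
    rw [dist_zero_right]
    calc ‖(ts k)⁻¹ • f (x + ts k • vs k) z - D z (vs k)‖
        = (ts k)⁻¹ * ‖f (x + ts k • vs k) z - ts k • D z (vs k)‖ := by
          rw [← norm_smul_of_nonneg (inv_nonneg.2 ht.le), smul_sub, inv_smul_smul₀ ht.ne']
      _ ≤ (ts k)⁻¹ * (ε / (‖v‖ + 1) * (ts k * ‖vs k‖)) := by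
          gcongr; exact hest _ ht _ hk z hz
      _ = ε * ‖vs k‖ / (‖v‖ + 1) := by field_simp
      _ < ε := by rw [div_lt_iff₀ (by positivity)]; gcongr
  simpa using ((hDz.tendsto v).comp hvs).add hquot

end HasUniformBDerivAt

end BDeriv

section ContingentCone

variable {d : ℕ}

theorem contCone_mono {S T : Set (Euc d)} (hST : S ⊆ T) (x : Euc d) :
    contCone S x ⊆ contCone T x := by
  rintro v ⟨vs, ts, hvs, hts, htpos, hmem⟩
  exact ⟨vs, ts, hvs, hts, htpos, fun k => hST (hmem k)⟩

theorem mem_contCone_of_eventually_infDist_le {S : Set (Euc d)} {x v : Euc d}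
    (hS : S.Nonempty)
    (h : ∀ η > (0:ℝ), ∀ᶠ t in 𝓝[>] (0:ℝ), infDist (x + t • v) S ≤ η * t) :
    v ∈ contCone S x := by
  have hpick : ∀ k : ℕ, ∃ t : ℝ, ∃ y ∈ S, 0 < t ∧ t < 1 / (k + 1) ∧
      ‖y - (x + t • v)‖ < 1 / (k + 1) * t := by
    intro k
    have hη : (0:ℝ) < 1 / (k + 1) := by positivity
    obtain ⟨t, hdist, ht⟩ := ((h _ (half_pos hη)).and (Ioo_mem_nhdsGT hη)).exists
    obtain ⟨y, hy, hxy⟩ := (infDist_lt_iff hS).1 <|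
      hdist.trans_lt (mul_lt_mul_of_pos_right (half_lt_self hη) ht.1)
    exact ⟨t, y, hy, ht.1, ht.2, by rwa [← dist_eq_norm, dist_comm]⟩
  choose ts ys hys htpos htlt hclose using hpick
  refine ⟨fun k => (ts k)⁻¹ • (ys k - x), ts, ?_, ?_, htpos, fun k => ?_⟩
  · rw [tendsto_iff_norm_sub_tendsto_zero]
    refine squeeze_zero (fun _ => norm_nonneg _) (fun k => ?_)
      tendsto_one_div_add_atTop_nhds_zero_nat
    have ht := htpos k
    have hdiff : (ts k)⁻¹ • (ys k - x) - v = (ts k)⁻¹ • (ys k - (x + ts k • v)) := by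
      rw [sub_add_eq_sub_sub, smul_sub _ (ys k - x), inv_smul_smul₀ ht.ne']
    calc ‖(ts k)⁻¹ • (ys k - x) - v‖ = (ts k)⁻¹ * ‖ys k - (x + ts k • v)‖ := by
          rw [hdiff, norm_smul_of_nonneg (inv_nonneg.2 ht.le)]
      _ ≤ (ts k)⁻¹ * (1 / (k + 1) * ts k) := by gcongr; exact (hclose k).le
      _ = 1 / (k + 1) := by field_simp
  · exact squeeze_zero (fun k => (htpos k).le) (fun k => (htlt k).le)
      tendsto_one_div_add_atTop_nhds_zero_nat
  · simpa [smul_smul, mul_inv_cancel₀ (htpos k).ne'] using hys k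

theorem inner_nonpos_of_mem_contCone_halfspace {a x v : Euc d} {b : ℝ} (hx : ⟪a, x⟫_ℝ = b)
    (hv : v ∈ contCone {y | ⟪a, y⟫_ℝ ≤ b} x) : ⟪a, v⟫_ℝ ≤ 0 := by
  obtain ⟨vs, ts, hvs, -, htpos, hmem⟩ := hv
  have hle : ∀ k, ⟪a, vs k⟫_ℝ ≤ 0 := fun k => by
    have hk := hmem k
    simp only [mem_ofPred_eq, inner_add_right, real_inner_smul_right, hx] at hk
    nlinarith [htpos k]
  exact le_of_tendsto' (tendsto_const_nhds.inner hvs) hle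

theorem eventually_add_smul_mem_halfspace {a x v : Euc d} {b : ℝ} (hx : ⟪a, x⟫_ℝ ≤ b)
    (hv : v ∈ contCone {y | ⟪a, y⟫_ℝ ≤ b} x) :
    ∀ᶠ t in 𝓝[>] (0:ℝ), ⟪a, x + t • v⟫_ℝ ≤ b := by
  rcases hx.lt_or_eq with hlt | heq
  · have hcont : Continuous fun t : ℝ => ⟪a, x + t • v⟫_ℝ := by fun_prop
    have hlim : Tendsto (fun t : ℝ => ⟪a, x + t • v⟫_ℝ) (𝓝[>] 0) (𝓝 ⟪a, x⟫_ℝ) :=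
      (hcont.tendsto' 0 _ (by simp)).mono_left nhdsWithin_le_nhds
    exact (hlim.eventually_lt_const hlt).mono fun _ => le_of_lt
  · have hav := inner_nonpos_of_mem_contCone_halfspace heq hv
    filter_upwards [self_mem_nhdsWithin] with t (ht : 0 < t)
    rw [inner_add_right, real_inner_smul_right, heq]
    nlinarith

theorem IsPolyhedral.eventually_add_smul_mem {K : Set (Euc d)} (hK : IsPolyhedral K)
    {x v : Euc d} (hx : x ∈ K) (hv : v ∈ contCone K x) :
    ∀ᶠ t in 𝓝[>] (0:ℝ), x + t • v ∈ K := by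
  obtain ⟨I, rfl⟩ := hK
  simp only [mem_iInter, mem_ofPred_eq] at hx ⊢
  refine (eventually_all_finset I).2 fun p hp => ?_
  exact eventually_add_smul_mem_halfspace (hx p hp) (contCone_mono (iInter₂_subset p hp) x hv)

end ContingentCone

section Equilibria

variable {n m : ℕ} {f : Euc n → Euc n → Euc m} {D : Euc n → Euc n → Euc m}
  {C : Set (Euc m)} {K : Set (Euc n)} {x : Euc n}

theorem HasUniformBDerivAt.map_mem_of_mem_contCone (hf : HasUniformBDerivAt f D K x)
    (hzero : ∀ z ∈ K, f x z = 0) (hD : ∀ z ∈ K, ∀ t : ℝ, 0 < t → ∀ v, D z (t • v) = t • D z v)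
    (hC : IsClosed C) (hCcone : ∀ c ∈ C, ∀ t : ℝ, 0 < t → t • c ∈ C)
    {z : Euc n} (hz : z ∈ K) (hDz : Continuous (D z)) {S : Set (Euc n)}
    (hS : ∀ y ∈ S, f y z ∈ C) {v : Euc n} (hv : v ∈ contCone S x) : D z v ∈ C := by
  obtain ⟨vs, ts, hvs, hts, htpos, hmem⟩ := hv
  exact hC.mem_of_tendsto (hf.tendsto_inv_smul hzero hD hz hDz hvs hts htpos)
    (Eventually.of_forall fun k => hCcone _ (hS _ (hmem k)) _ (inv_pos.2 (htpos k)))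

theorem HasUniformBDerivAt.eventually_infDist_equi_le (hf : HasUniformBDerivAt f D K x)
    (hzero : ∀ z ∈ K, f x z = 0) (hD : ∀ z ∈ K, ∀ t : ℝ, 0 < t → ∀ v, D z (t • v) = t • D z v)
    (hCcone : ∀ c ∈ C, ∀ t : ℝ, 0 < t → t • c ∈ C)
    (hErr : ∃ κ > (0:ℝ), ∃ δ > (0:ℝ), ∀ y ∈ ball x δ ∩ K, ∀ r : ℝ,
      (∀ z ∈ K, infDist (f y z) C ≤ r) → infDist y (Equi f C K) ≤ κ * r)
    {v : Euc n} (hvC : ∀ z ∈ K, D z v ∈ C) (hvK : ∀ᶠ t in 𝓝[>] (0:ℝ), x + t • v ∈ K)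
    {η : ℝ} (hη : 0 < η) :
    ∀ᶠ t in 𝓝[>] (0:ℝ), infDist (x + t • v) (Equi f C K) ≤ η * t := by
  obtain ⟨κ, hκ, δE, hδE, hErr⟩ := hErr
  set ε := η / (κ * (‖v‖ + 1))
  obtain ⟨δ, hδ, hest⟩ := hf.norm_sub_smul_le hzero hD (ε := ε) (by positivity)
  have hsmall : ∀ᶠ t in 𝓝[>] (0:ℝ), t * ‖v‖ < min δ δE := by
    have hlim : Tendsto (fun t : ℝ => t * ‖v‖) (𝓝[>] 0) (𝓝 0) :=
      ((continuous_mul_const ‖v‖).tendsto' 0 0 (zero_mul _)).mono_left nhdsWithin_le_nhds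
    exact hlim.eventually_lt_const (lt_min hδ hδE)
  filter_upwards [hvK, hsmall, self_mem_nhdsWithin] with t hxK htv (ht : 0 < t)
  have hball : x + t • v ∈ ball x δE := by
    rw [mem_ball, dist_eq_norm, add_sub_cancel_left, norm_smul_of_nonneg ht.le]
    exact htv.trans_le (min_le_right _ _)
  have hres : ∀ z ∈ K, infDist (f (x + t • v) z) C ≤ ε * (t * ‖v‖) := fun z hz =>
    (infDist_le_dist_of_mem (hCcone _ (hvC z hz) t ht)).trans <|
      (dist_eq_norm _ _).trans_le (hest t ht v (htv.trans_le (min_le_left _ _)) z hz)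
  calc infDist (x + t • v) (Equi f C K) ≤ κ * (ε * (t * ‖v‖)) := hErr _ ⟨hball, hxK⟩ _ hres
    _ = η * t * (‖v‖ / (‖v‖ + 1)) := by simp only [ε]; field_simp
    _ ≤ η * t :=
      mul_le_of_le_one_right (by positivity) ((div_le_one (by positivity)).2 (by linarith))

end Equilibria

theorem exact_tangent_representation_general {n m : ℕ}
    (f : Euc n → Euc n → Euc m) (C : Set (Euc m)) (K : Set (Euc n))
    (hCclosed : IsClosed C)
    (hCcone : ∀ c ∈ C, ∀ t : ℝ, 0 < t → t • c ∈ C)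
    (xb : Euc n) (hxb : xb ∈ Equi f C K)
    (hKpoly : IsPolyhedral K)
    (hfzero : ∀ z ∈ K, f xb z = 0)
    (D : Euc n → Euc n → Euc m)
    (hDcont : ∀ z ∈ K, Continuous (D z))
    (hDph : ∀ z ∈ K, ∀ t : ℝ, 0 < t → ∀ v, D z (t • v) = t • D z v)
    (hStrict : ∀ ε > (0:ℝ), ∃ δ > (0:ℝ), ∀ x₁ ∈ ball xb δ, ∀ x₂ ∈ ball xb δ, ∀ z ∈ K,
      ‖f x₁ z - f x₂ z - D z (x₁ - x₂)‖ ≤ ε * ‖x₁ - x₂‖)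
    (hErr : ∃ κ > (0:ℝ), ∃ δ > (0:ℝ), ∀ x ∈ ball xb δ ∩ K, ∀ r : ℝ,
      (∀ z ∈ K, infDist (f x z) C ≤ r) → infDist x (Equi f C K) ≤ κ * r)
 :
    contCone (Equi f C K) xb = (⋂ z ∈ K, D z ⁻¹' C) ∩ contCone K xb := by
  have hf : HasUniformBDerivAt f D K xb := hasUniformBDerivAt_of_strict hStrict
  ext v
  constructor
  · intro hv
    refine ⟨mem_iInter₂.2 fun z hz => ?_, contCone_mono (fun y hy => hy.1) xb hv⟩
    exact hf.map_mem_of_mem_contCone hfzero hDph hCclosed hCcone hz (hDcont z hz)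
      (fun y hy => hy.2 z hz) hv
  · rintro ⟨hvC, hvK⟩
    refine mem_contCone_of_eventually_infDist_le ⟨xb, hxb⟩ fun η hη => ?_
    exact hf.eventually_infDist_equi_le hfzero hDph hCcone hErr (mem_iInter₂.1 hvC)
      (hKpoly.eventually_add_smul_mem hxb.1 hvK) hη

/-- **Exact tangential representation** (Corollary 3.7): under polyhedrality of `K`,
`f(xb,·) ≡ 0` on `K`, strict uniform B-differentiability, equicontinuity and a local
error bound, `T(xb,Equi) = ⋂_{z∈K} (D_Bf(xb,z))⁻¹(C) ∩ T(xb,K)`. -/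
theorem exact_tangent_representation {n m : ℕ}
    (f : Euc n → Euc n → Euc m) (C : Set (Euc m)) (K : Set (Euc n))
    (hCclosed : IsClosed C) (hCconvex : Convex ℝ C)
    (hCzero : (0 : Euc m) ∈ C)
    (hCcone : ∀ c ∈ C, ∀ t : ℝ, 0 < t → t • c ∈ C)
    (hCpointed : ∀ c ∈ C, -c ∈ C → c = 0)
    (hCnontrivial : ∃ c ∈ C, c ≠ 0)
    (hKne : K.Nonempty) (hKclosed : IsClosed K)
    (xb : Euc n) (hxb : xb ∈ Equi f C K)
    (hKpoly : IsPolyhedral K)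
    (hfzero : ∀ z ∈ K, f xb z = 0)
    (D : Euc n → Euc n → Euc m)
    (hDcont : ∀ z ∈ K, Continuous (D z))
    (hDph : ∀ z ∈ K, ∀ t : ℝ, 0 < t → ∀ v, D z (t • v) = t • D z v)
    (hStrict : ∀ ε > (0:ℝ), ∃ δ > (0:ℝ), ∀ x₁ ∈ ball xb δ, ∀ x₂ ∈ ball xb δ, ∀ z ∈ K,
      ‖f x₁ z - f x₂ z - D z (x₁ - x₂)‖ ≤ ε * ‖x₁ - x₂‖)
    (hEqui : Equicontinuous (fun z : {z // z ∈ K} => D z.1))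
    (hErr : ∃ κ > (0:ℝ), ∃ δ > (0:ℝ), ∀ x ∈ ball xb δ ∩ K, ∀ r : ℝ,
      (∀ z ∈ K, infDist (f x z) C ≤ r) → infDist x (Equi f C K) ≤ κ * r)
 :
    contCone (Equi f C K) xb = (⋂ z ∈ K, D z ⁻¹' C) ∩ contCone K xb :=
  exact_tangent_representation_general f C K hCclosed hCcone xb hxb hKpoly hfzero D hDcont hDph
    hStrict hErr
end
end

section
/- Let f : ℝ^n × ℝ^n → ℝ^m be a bifunction, C ⊆ ℝ^m a nontrivial closed convex pointed cone, K ⊆ ℝ^n nonempty and closed, and let ϑ : ℝ^n → ℝ be continuous around x̄ ∈ Equi. Suppose x̄ is a local minimizer of ϑ over Equi, (i) f is B-differentiable at x̄ uniformly on K with family {D_Bf(x̄,z) : z ∈ K}, and (ii) a local error bound is valid near x̄ (∃ κ, δ > 0 with dist(x,Equi) ≤ κ·ν(x) for all x ∈ B(x̄,δ) ∩ K). Then −∂^+ϑ(x̄) ⊆ (⋂_{z∈K} (D_Bf(x̄,z))⁻¹(C) ∩ W(x̄,K))°, where S° denotes the negative dual cone of S and ∂^+ϑ(x̄) is the Fréchet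 upper subdifferential of ϑ at x̄. -/
open Filter Metric Set Pointwise
open scoped InnerProductSpace Topology

noncomputable section

/-- Dini upper directional derivative (with values in `EReal`). -/
def diniUpper {d : ℕ} (ϑ : Euc d → ℝ) (x w : Euc d) : EReal :=
  Filter.limsup (fun t : ℝ => (((ϑ (x + t • w) - ϑ x) / t : ℝ) : EReal)) (𝓝[>] (0:ℝ))

/-- Dini lower directional derivative (with values in `EReal`). -/
def diniLower {d : ℕ} (ϑ : Euc d → ℝ) (x w : Euc d) : EReal :=
  Filter.liminf (fun t : ℝ => (((ϑ (x + t • w) - ϑ x) / t : ℝ) : EReal)) (𝓝[>] (0:ℝ))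

/-- Dini–Hadamard upper directional derivative (with values in `EReal`). -/
def dhUpper {d : ℕ} (ϑ : Euc d → ℝ) (x w : Euc d) : EReal :=
  Filter.limsup (fun p : Euc d × ℝ => (((ϑ (x + p.2 • p.1) - ϑ x) / p.2 : ℝ) : EReal))
    ((𝓝 w) ×ˢ (𝓝[>] (0:ℝ)))

/-- Dini–Hadamard lower directional derivative (with values in `EReal`). -/
def dhLower {d : ℕ} (ϑ : Euc d → ℝ) (x w : Euc d) : EReal :=
  Filter.liminf (fun p : Euc d × ℝ => (((ϑ (x + p.2 • p.1) - ϑ x) / p.2 : ℝ) : EReal))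
    ((𝓝 w) ×ˢ (𝓝[>] (0:ℝ)))

/-- Fréchet upper subdifferential of a real-valued function. -/
def upperSubdiff {d : ℕ} (ϑ : Euc d → ℝ) (x : Euc d) : Set (Euc d) :=
  {v | Filter.limsup
      (fun y => (((ϑ y - ϑ x - ⟪v, y - x⟫_ℝ) / ‖y - x‖ : ℝ) : EReal)) (𝓝[≠] x) ≤ 0}

/-- Fréchet regular (lower) subdifferential of a real-valued function. -/
def regularSubdiff {d : ℕ} (ϑ : Euc d → ℝ) (x : Euc d) : Set (Euc d) :=
  {v | 0 ≤ Filter.liminf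
      (fun y => (((ϑ y - ϑ x - ⟪v, y - x⟫_ℝ) / ‖y - x‖ : ℝ) : EReal)) (𝓝[≠] x)}

theorem negDualCone_anti {d : ℕ} {S T : Set (Euc d)} (hST : S ⊆ T) :
    negDualCone T ⊆ negDualCone S :=
  fun _ hv s hs => hv s (hST hs)

theorem eventually_sub_sub_inner_le_of_mem_upperSubdiff {d : ℕ} {ϑ : Euc d → ℝ} {x u : Euc d}
    (hu : u ∈ upperSubdiff ϑ x) {ε : ℝ} (hε : 0 < ε) :
    ∀ᶠ y in 𝓝 x, ϑ y - ϑ x - ⟪u, y - x⟫_ℝ ≤ ε * ‖y - x‖ := by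
  have hlt : ∀ᶠ y in 𝓝[≠] x,
      (((ϑ y - ϑ x - ⟪u, y - x⟫_ℝ) / ‖y - x‖ : ℝ) : EReal) < (ε : EReal) :=
    eventually_lt_of_limsup_lt (hu.trans_lt (by exact_mod_cast hε)) (by isBoundedDefault)
  filter_upwards [eventually_nhdsWithin_iff.mp hlt] with y hy
  rcases eq_or_ne y x with rfl | hyx
  · simp
  · have hnorm : 0 < ‖y - x‖ := norm_pos_iff.mpr (sub_ne_zero.mpr hyx)
    exact ((div_lt_iff₀ hnorm).mp (EReal.coe_lt_coe_iff.mp (hy hyx))).le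

theorem neg_upperSubdiff_subset_negDualCone_contCone {d : ℕ} {ϑ : Euc d → ℝ} {S : Set (Euc d)}
    {x : Euc d} (hmin : IsLocalMinOn ϑ S x) :
    -upperSubdiff ϑ x ⊆ negDualCone (contCone S x) := by
  rintro v hv w ⟨vs, ts, hvs, hts, hts_pos, hmem⟩
  rw [Set.mem_neg] at hv
  have hpts : Tendsto (fun k => x + ts k • vs k) atTop (𝓝[S] x) := by
    refine tendsto_nhdsWithin_iff.mpr ⟨?_, Eventually.of_forall hmem⟩
    simpa using tendsto_const_nhds.add (hts.smul hvs)
  have hbound : ∀ ε > (0 : ℝ), ⟪v, w⟫_ℝ ≤ ε * ‖w‖ := by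
    intro ε hε
    refine le_of_tendsto_of_tendsto (tendsto_const_nhds.inner hvs) (hvs.norm.const_mul ε) ?_
    have hnear := eventually_sub_sub_inner_le_of_mem_upperSubdiff hv hε
    filter_upwards [hpts.eventually (show ∀ᶠ y in 𝓝[S] x, ϑ x ≤ ϑ y from hmin),
      (hpts.mono_right nhdsWithin_le_nhds).eventually hnear] with k hk_min hk_upper
    simp only [add_sub_cancel_left, inner_neg_left, real_inner_smul_right, norm_smul,
      Real.norm_eq_abs, abs_of_pos (hts_pos k)] at hk_upper
    have : ts k * ⟪v, vs k⟫_ℝ ≤ ts k * (ε * ‖vs k‖) := by nlinarith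
    exact le_of_mul_le_mul_left this (hts_pos k)
  have hlim : Tendsto (fun ε : ℝ => ε * ‖w‖) (𝓝[>] 0) (𝓝 0) := by
    simpa using ((tendsto_id (x := 𝓝 (0 : ℝ))).mono_left nhdsWithin_le_nhds).mul_const ‖w‖
  exact ge_of_tendsto hlim (eventually_nhdsWithin_of_forall hbound)

theorem mem_contCone_of_forall_exists_near {d : ℕ} {S : Set (Euc d)} {x w : Euc d}
    (h : ∀ ε > (0 : ℝ), ∃ t, 0 < t ∧ t < ε ∧ ∃ y ∈ S, ‖y - (x + t • w)‖ ≤ ε * t) :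
    w ∈ contCone S x := by
  choose t ht_pos ht_lt y hyS hy using fun k : ℕ => h (1 / (k + 1)) Nat.one_div_pos_of_nat
  have hdiff : ∀ k, (t k)⁻¹ • (y k - x) - w = (t k)⁻¹ • (y k - (x + t k • w)) := fun k => by
    rw [sub_add_eq_sub_sub, smul_sub _ (y k - x), inv_smul_smul₀ (ht_pos k).ne']
  refine ⟨fun k => (t k)⁻¹ • (y k - x), t, ?_, ?_, ht_pos, fun k => ?_⟩
  · refine tendsto_iff_norm_sub_tendsto_zero.mpr <|
      squeeze_zero (fun _ => norm_nonneg _) (fun k => ?_) tendsto_one_div_add_atTop_nhds_zero_nat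
    rw [hdiff, norm_smul, norm_inv, Real.norm_eq_abs, abs_of_pos (ht_pos k)]
    exact inv_mul_le_of_le_mul₀ (ht_pos k).le (by positivity) (by linarith [hy k])
  · exact squeeze_zero (fun k => (ht_pos k).le) (fun k => (ht_lt k).le)
      tendsto_one_div_add_atTop_nhds_zero_nat
  · simpa [smul_inv_smul₀ (ht_pos k).ne'] using hyS k

theorem infDist_le_norm_sub_sub_of_add_mem {E : Type*} [SeminormedAddCommGroup E] {C : Set E}
    (hadd : ∀ a ∈ C, ∀ b ∈ C, a + b ∈ C) {p a b : E} (ha : a ∈ C) (hb : b ∈ C) :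
    infDist p C ≤ ‖p - a - b‖ := by
  simpa [dist_eq_norm, sub_add_eq_sub_sub] using infDist_le_dist_of_mem (x := p) (hadd a ha b hb)

theorem inter_radialCone_subset_contCone_Equi {n m : ℕ}
    {f : Euc n → Euc n → Euc m} {C : Set (Euc m)} {K : Set (Euc n)}
    (hCconvex : Convex ℝ C) (hCcone : ∀ c ∈ C, ∀ t : ℝ, 0 < t → t • c ∈ C)
    {xb : Euc n} (hxb : xb ∈ Equi f C K) {D : Euc n → Euc n → Euc m}
    (hDph : ∀ z ∈ K, ∀ t : ℝ, 0 < t → ∀ v, D z (t • v) = t • D z v)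
    (hBdiff : ∀ ε > (0:ℝ), ∃ δ > (0:ℝ), ∀ x ∈ ball xb δ, ∀ z ∈ K,
      ‖f x z - f xb z - D z (x - xb)‖ ≤ ε * ‖x - xb‖)
    (hErr : ∃ κ > (0:ℝ), ∃ δ > (0:ℝ), ∀ x ∈ ball xb δ ∩ K, ∀ r : ℝ,
      (∀ z ∈ K, infDist (f x z) C ≤ r) → infDist x (Equi f C K) ≤ κ * r) :
    (⋂ z ∈ K, D z ⁻¹' C) ∩ radialCone K xb ⊆ contCone (Equi f C K) xb := by
  rintro w ⟨hwD, hwK⟩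
  simp only [mem_iInter, mem_preimage] at hwD
  refine mem_contCone_of_forall_exists_near fun ε hε => ?_
  obtain ⟨κ, hκ, δ₂, hδ₂, herr⟩ := hErr
  -- `ε'` is chosen so that the error bound turns a residual `ε' t ‖w‖` into a distance `< ε t`.
  set ε' := ε / (κ * ‖w‖ + 1)
  have hε' : 0 < ε' := by positivity
  have hε'_mul : ε' * (κ * ‖w‖) = ε - ε' := by
    simp only [ε']; field_simp; ring
  obtain ⟨δ₁, hδ₁, hB⟩ := hBdiff ε' hε'
  obtain ⟨t, ht_pos, ht_lt, htK⟩ :=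
    hwK (min ε (min δ₁ δ₂ / (‖w‖ + 1))) (lt_min hε (by positivity))
  have htw : t * ‖w‖ < min δ₁ δ₂ := by
    have := (lt_div_iff₀ (by positivity)).mp (ht_lt.trans_le (min_le_right _ _))
    nlinarith
  set x := xb + t • w
  have hx_norm : ‖x - xb‖ = t * ‖w‖ := by
    simp [x, norm_smul, abs_of_pos ht_pos]
  have hx_ball : ∀ δ, t * ‖w‖ < δ → x ∈ ball xb δ := fun δ h => by
    rwa [mem_ball, dist_eq_norm, hx_norm]
  have hres : ∀ z ∈ K, infDist (f x z) C ≤ ε' * (t * ‖w‖) := fun z hz => by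
    have hDx : D z (x - xb) = t • D z w := by simp [x, hDph z hz t ht_pos]
    calc infDist (f x z) C ≤ ‖f x z - f xb z - D z (x - xb)‖ :=
          infDist_le_norm_sub_sub_of_add_mem
            (fun a ha b hb => hCconvex.add_mem_of_smul_mem hCcone ha hb)
            (hxb.2 z hz) (hDx ▸ hCcone _ (hwD z hz) t ht_pos)
      _ ≤ ε' * (t * ‖w‖) := hx_norm ▸ hB x (hx_ball δ₁ (htw.trans_le (min_le_left _ _))) z hz
  have hdist : infDist x (Equi f C K) < ε * t :=
    calc infDist x (Equi f C K) ≤ κ * (ε' * (t * ‖w‖)) :=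
          herr x ⟨hx_ball δ₂ (htw.trans_le (min_le_right _ _)), htK⟩ _ hres
      _ = t * (ε - ε') := by rw [← hε'_mul]; ring
      _ < ε * t := by nlinarith
  obtain ⟨y, hyE, hxy⟩ := (infDist_lt_iff ⟨xb, hxb⟩).mp hdist
  exact ⟨t, ht_pos, ht_lt.trans_le (min_le_left _ _), y, hyE, by
    rw [← dist_eq_norm, dist_comm]; exact hxy.le⟩

theorem necessary_optimality_condition_general {n m : ℕ}
    (f : Euc n → Euc n → Euc m) (C : Set (Euc m)) (K : Set (Euc n))
    (hCconvex : Convex ℝ C)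
    (hCcone : ∀ c ∈ C, ∀ t : ℝ, 0 < t → t • c ∈ C)
    (ϑ : Euc n → ℝ) (xb : Euc n) (hxb : xb ∈ Equi f C K)
    (hmin : ∃ U ∈ 𝓝 xb, ∀ x ∈ Equi f C K ∩ U, ϑ xb ≤ ϑ x)
    (D : Euc n → Euc n → Euc m)
    (hDph : ∀ z ∈ K, ∀ t : ℝ, 0 < t → ∀ v, D z (t • v) = t • D z v)
    (hBdiff : ∀ ε > (0:ℝ), ∃ δ > (0:ℝ), ∀ x ∈ ball xb δ, ∀ z ∈ K,
      ‖f x z - f xb z - D z (x - xb)‖ ≤ ε * ‖x - xb‖)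
    (hErr : ∃ κ > (0:ℝ), ∃ δ > (0:ℝ), ∀ x ∈ ball xb δ ∩ K, ∀ r : ℝ,
      (∀ z ∈ K, infDist (f x z) C ≤ r) → infDist x (Equi f C K) ≤ κ * r)
 :
    -upperSubdiff ϑ xb ⊆ negDualCone ((⋂ z ∈ K, D z ⁻¹' C) ∩ radialCone K xb) := by
  obtain ⟨U, hU, hminU⟩ := hmin
  have hlocal : IsLocalMinOn ϑ (Equi f C K) xb :=
    mem_of_superset (inter_mem_nhdsWithin _ hU) hminU
  exact (neg_upperSubdiff_subset_negDualCone_contCone hlocal).trans <| negDualCone_anti <|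
    inter_radialCone_subset_contCone_Equi hCconvex hCcone hxb hDph hBdiff hErr

/-- **Necessary optimality condition** (Theorem 4.3): if `xb` locally minimizes `ϑ` over
`Equi`, then `-∂⁺ϑ(xb) ⊆ (⋂_{z∈K} (D_Bf(xb,z))⁻¹(C) ∩ W(xb,K))°`. -/
theorem necessary_optimality_condition {n m : ℕ}
    (f : Euc n → Euc n → Euc m) (C : Set (Euc m)) (K : Set (Euc n))
    (hCclosed : IsClosed C) (hCconvex : Convex ℝ C)
    (hCzero : (0 : Euc m) ∈ C)
    (hCcone : ∀ c ∈ C, ∀ t : ℝ, 0 < t → t • c ∈ C)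
    (hCpointed : ∀ c ∈ C, -c ∈ C → c = 0)
    (hCnontrivial : ∃ c ∈ C, c ≠ 0)
    (hKne : K.Nonempty) (hKclosed : IsClosed K)
    (ϑ : Euc n → ℝ) (xb : Euc n) (hxb : xb ∈ Equi f C K)
    (hcont : ∃ U ∈ 𝓝 xb, ContinuousOn ϑ U)
    (hmin : ∃ U ∈ 𝓝 xb, ∀ x ∈ Equi f C K ∩ U, ϑ xb ≤ ϑ x)
    (D : Euc n → Euc n → Euc m)
    (hDcont : ∀ z ∈ K, Continuous (D z))
    (hDph : ∀ z ∈ K, ∀ t : ℝ, 0 < t → ∀ v, D z (t • v) = t • D z v)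
    (hBdiff : ∀ ε > (0:ℝ), ∃ δ > (0:ℝ), ∀ x ∈ ball xb δ, ∀ z ∈ K,
      ‖f x z - f xb z - D z (x - xb)‖ ≤ ε * ‖x - xb‖)
    (hErr : ∃ κ > (0:ℝ), ∃ δ > (0:ℝ), ∀ x ∈ ball xb δ ∩ K, ∀ r : ℝ,
      (∀ z ∈ K, infDist (f x z) C ≤ r) → infDist x (Equi f C K) ≤ κ * r)
 :
    -upperSubdiff ϑ xb ⊆ negDualCone ((⋂ z ∈ K, D z ⁻¹' C) ∩ radialCone K xb) :=
  necessary_optimality_condition_general f C K hCconvex hCcone ϑ xb hxb hmin D hDph hBdiff hErr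
end
end

section
/- Let f : ℝ^n × ℝ^n → ℝ^m be a bifunction, C ⊆ ℝ^m a nontrivial closed convex pointed cone, K ⊆ ℝ^n nonempty and closed, and let ϑ : ℝ^n → ℝ be continuous around x̄ ∈ Equi with x̄ a local minimizer of ϑ over Equi. Assume f is B-differentiable at x̄ uniformly on K with family {D_Bf(x̄,z) : z ∈ K} and a local error bound is valid near x̄. Assume additionally: (i) K is polyhedral; (ii) each D_Bf(x̄,z) is C-concave, i.e. D_Bf(x̄,z)(v₁) + D_Bf(x̄,z)(v₂) ≤_C D_Bf(x̄,z)(v₁+v₂) for all v₁, v₂ ∈ ℝ^n; and (iii) the qualification condition ⋂_{z∈K} (D_Bf(x̄,z))⁻¹(C) ∩ int T(x̄,K) ≠ ∅ holds. Then −∂^+ϑ(x̄) ⊆ (⋂_{z∈K} (D_Bf(x̄,z))⁻¹(C))° + N(x̄,K), where N(x̄,K) is the normal cone of convex analysis to K at x̄. -/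
open Filter Metric Set Pointwise
open scoped InnerProductSpace Topology

noncomputable section

/-!
Write `A = ⋂_{z ∈ K} D(z)⁻¹(C)` and let `T` be the cone of directions obeying the constraints
of `K` active at `x̄`; for polyhedral `K` this is `T(x̄, K)`, and `K - x̄ ⊆ T`, so `T° ⊆ N(x̄, K)`.
`C`-concavity makes `A` a closed convex cone. For `w ∈ A ∩ T` the points `x̄ + t w` lie in `K`
for small `t > 0` and, by uniform B-differentiability, violate the equilibrium constraints only by
`o(t)`; the error bound then puts `w` in the contingent cone of `Equi`, on which every upper
subgradient at the local minimizer `x̄` is nonnegative. Hence `-∂⁺ϑ(x̄) ⊆ (A ∩ T)°`. Finally the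
qualification condition `A ∩ int T ≠ ∅` makes `A° + T°` closed, and the bipolar theorem gives
`(A ∩ T)° = A° + T°`.
-/

open ProperCone

section ConeDuality

variable {E : Type*} [NormedAddCommGroup E] [InnerProductSpace ℝ E]

lemma mul_norm_le_inner_of_mem_innerDual [CompleteSpace E] {T : Set E} {w b : E} {ε : ℝ}
    (hε : 0 ≤ ε) (hT : closedBall w ε ⊆ T) (hb : b ∈ innerDual T) : ε * ‖b‖ ≤ ⟪w, b⟫_ℝ := by
  rcases eq_or_ne b 0 with rfl | hb0
  · simp
  have hnorm : 0 < ‖b‖ := norm_pos_iff.2 hb0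
  have hmem : w - (ε / ‖b‖) • b ∈ T := hT <| by
    rw [mem_closedBall, dist_eq_norm, sub_sub_cancel_left, norm_neg, norm_smul, Real.norm_eq_abs,
      abs_of_nonneg (by positivity), div_mul_cancel₀ _ hnorm.ne']
  have h := mem_innerDual.1 hb hmem
  rw [inner_sub_left, real_inner_smul_left, real_inner_self_eq_norm_sq] at h
  calc ε * ‖b‖ = ε / ‖b‖ * ‖b‖ ^ 2 := by field_simp
    _ ≤ ⟪w, b⟫_ℝ := by linarith

/-- If `closedBall w ε ⊆ T` and `w ∈ A`, then `ε ‖b‖ ≤ ⟪w, a + b⟫` for `a ∈ innerDual A` and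
`b ∈ innerDual T`, so the summands of a convergent sequence in the sum stay bounded. -/
lemma isClosed_innerDual_add_innerDual [ProperSpace E] {A T : Set E}
    (h : (A ∩ interior T).Nonempty) :
    IsClosed ((innerDual A : Set E) + (innerDual T : Set E)) := by
  obtain ⟨w, hwA, hwT⟩ := h
  obtain ⟨ε, hε, hball⟩ := nhds_basis_closedBall.mem_iff.1 (mem_interior_iff_mem_nhds.1 hwT)
  refine IsSeqClosed.isClosed fun {u p} hu hup => ?_
  choose a ha b hb hab using hu
  have hbound : ∀ k, ‖b k‖ ≤ ⟪w, u k⟫_ℝ / ε := fun k => by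
    rw [le_div_iff₀ hε, ← hab, inner_add_right, mul_comm]
    linarith [mul_norm_le_inner_of_mem_innerDual hε.le hball (hb k), mem_innerDual.1 (ha k) hwA]
  obtain ⟨R, hR⟩ := ((tendsto_const_nhds.inner hup).div_const ε).bddAbove_range
  obtain ⟨q, -, φ, hφ, hbq⟩ := tendsto_subseq_of_bounded (isBounded_closedBall (x := 0) (r := R))
    fun k => mem_closedBall_zero_iff.2 ((hbound k).trans (hR ⟨k, rfl⟩))
  have haq : Tendsto (a ∘ φ) atTop (𝓝 (p - q)) := by
    refine ((hup.comp hφ.tendsto_atTop).sub hbq).congr fun k => ?_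
    simp [← hab]
  refine ⟨p - q, (innerDual A).isClosed.mem_of_tendsto haq (.of_forall fun k => ha _),
    q, (innerDual T).isClosed.mem_of_tendsto hbq (.of_forall fun k => hb _), sub_add_cancel p q⟩

lemma innerDual_inter_subset_add [ProperSpace E] (A T : ProperCone ℝ E)
    (h : ((A : Set E) ∩ interior T).Nonempty) :
    (innerDual ((A : Set E) ∩ T) : Set E) ⊆
      (innerDual (A : Set E) : Set E) + (innerDual (T : Set E) : Set E) := by
  let P : ProperCone ℝ E :=
    ⟨(innerDual (A : Set E)).toSubmodule ⊔ (innerDual (T : Set E)).toSubmodule, by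
      rw [Submodule.carrier_eq_coe, Submodule.coe_sup]
      exact isClosed_innerDual_add_innerDual h⟩
  intro y hy
  suffices y ∈ P from Submodule.mem_sup.1 this
  rw [← innerDual_innerDual P]
  intro x hx
  have hxA : x ∈ A := by
    rw [← innerDual_innerDual A]; exact fun a ha => hx (Submodule.mem_sup_left ha)
  have hxT : x ∈ T := by
    rw [← innerDual_innerDual T]; exact fun b hb => hx (Submodule.mem_sup_right hb)
  exact hy ⟨hxA, hxT⟩

end ConeDuality

lemma neg_mem_negDualCone {d : ℕ} {S : Set (Euc d)} {a : Euc d} (ha : a ∈ innerDual S) :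
    -a ∈ negDualCone S := fun s hs => by
  rw [inner_neg_left, neg_nonpos, real_inner_comm]
  exact ha hs

section ContingentCone

variable {d : ℕ} {S : Set (Euc d)} {x w : Euc d}

lemma mem_contCone_of_tendsto {v : ℝ → Euc d} (hv : Tendsto v (𝓝[>] 0) (𝓝 w))
    (hS : ∀ᶠ t in 𝓝[>] 0, x + t • v t ∈ S) : w ∈ contCone S x := by
  obtain ⟨ts, hts, hmem⟩ := exists_seq_forall_of_frequently (hS.and self_mem_nhdsWithin).frequently
  exact ⟨v ∘ ts, ts, hv.comp hts, tendsto_nhds_of_tendsto_nhdsWithin hts,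
    fun k => (hmem k).2, fun k => (hmem k).1⟩

lemma mem_contCone_of_infDist_le (hS : S.Nonempty)
    (h : ∀ ε > 0, ∀ᶠ t in 𝓝[>] 0, infDist (x + t • w) S ≤ ε * t) : w ∈ contCone S x := by
  have hnear : ∀ t : ℝ, ∃ y, 0 < t →
      y ∈ S ∧ dist (x + t • w) y < infDist (x + t • w) S + t ^ 2 := by
    intro t
    by_cases ht : 0 < t
    · obtain ⟨y, hyS, hy⟩ := (infDist_lt_iff hS).1 (lt_add_of_pos_right _ (pow_pos ht 2))
      exact ⟨y, fun _ => ⟨hyS, hy⟩⟩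
    · exact ⟨x, fun h => absurd h ht⟩
  choose y hy using hnear
  refine mem_contCone_of_tendsto (v := fun t => t⁻¹ • (y t - x)) ?_ ?_
  · have ht0 : Tendsto (fun t : ℝ => t) (𝓝[>] 0) (𝓝 0) :=
      tendsto_nhdsWithin_of_tendsto_nhds tendsto_id
    refine Metric.tendsto_nhds.2 fun ε hε => ?_
    filter_upwards [h (ε / 2) (half_pos hε), self_mem_nhdsWithin,
      ht0.eventually (gt_mem_nhds (half_pos hε))] with t hdist (ht : 0 < t) htε
    have hdiff : t⁻¹ • (y t - x) - w = t⁻¹ • (y t - (x + t • w)) := by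
      rw [smul_sub, smul_sub, smul_add, smul_smul, inv_mul_cancel₀ ht.ne', one_smul]; abel
    calc dist (t⁻¹ • (y t - x)) w = t⁻¹ * dist (x + t • w) (y t) := by
          rw [dist_eq_norm, hdiff, norm_smul, Real.norm_eq_abs, abs_of_pos (inv_pos.2 ht),
            dist_comm, dist_eq_norm]
      _ ≤ t⁻¹ * (infDist (x + t • w) S + t ^ 2) :=
          mul_le_mul_of_nonneg_left (hy t ht).2.le (inv_pos.2 ht).le
      _ ≤ t⁻¹ * (ε / 2 * t + t ^ 2) := by gcongr
      _ = ε / 2 + t := by field_simp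
      _ < ε := by linarith
  · filter_upwards [self_mem_nhdsWithin] with t (ht : 0 < t)
    simpa [smul_smul, mul_inv_cancel₀ ht.ne'] using (hy t ht).1

end ContingentCone

section UpperSubdifferential

variable {d : ℕ} {ϑ : Euc d → ℝ} {x v : Euc d}

lemma eventually_le_of_mem_upperSubdiff (hv : v ∈ upperSubdiff ϑ x) {c : ℝ} (hc : 0 < c) :
    ∀ᶠ y in 𝓝 x, ϑ y - ϑ x - ⟪v, y - x⟫_ℝ ≤ c * ‖y - x‖ := by
  have hlt := eventually_lt_of_limsup_lt (lt_of_le_of_lt hv (EReal.coe_pos.2 hc))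
  filter_upwards [eventually_nhdsWithin_iff.1 hlt] with y hy
  rcases eq_or_ne y x with rfl | hyx
  · simp
  have hq := EReal.coe_lt_coe_iff.1 (hy hyx)
  rw [div_lt_iff₀ (norm_pos_iff.2 (sub_ne_zero.2 hyx))] at hq
  exact hq.le

lemma upperSubdiff_subset_innerDual_contCone {S : Set (Euc d)} (hmin : IsLocalMinOn ϑ S x) :
    upperSubdiff ϑ x ⊆ innerDual (contCone S x) := by
  rintro v hv w ⟨vs, ts, hvs, hts, hpos, hmem⟩
  have hy : Tendsto (fun k => x + ts k • vs k) atTop (𝓝[S] x) := by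
    refine tendsto_nhdsWithin_iff.2 ⟨?_, .of_forall hmem⟩
    simpa using tendsto_const_nhds.add (hts.smul hvs)
  have hbound : ∀ c > 0, -⟪v, w⟫_ℝ ≤ c * ‖w‖ := by
    intro c hc
    refine le_of_tendsto_of_tendsto (tendsto_const_nhds.inner hvs).neg (hvs.norm.const_mul c) ?_
    filter_upwards [hy.eventually hmin,
      (tendsto_nhds_of_tendsto_nhdsWithin hy).eventually (eventually_le_of_mem_upperSubdiff hv hc)]
      with k hmink hk
    rw [add_sub_cancel_left, real_inner_smul_right, norm_smul, Real.norm_eq_abs,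
      abs_of_pos (hpos k)] at hk
    nlinarith [hpos k]
  have hc : Tendsto (fun c : ℝ => c * ‖w‖) (𝓝[>] 0) (𝓝 0) := by
    simpa using (tendsto_nhdsWithin_of_tendsto_nhds (tendsto_id (x := 𝓝 (0 : ℝ)))).mul_const ‖w‖
  have hneg := ge_of_tendsto hc (eventually_nhdsWithin_of_forall fun c (hpos : 0 < c) =>
    hbound c hpos)
  change 0 ≤ ⟪w, v⟫_ℝ
  rw [real_inner_comm]
  linarith

end UpperSubdifferential

section Polyhedron

variable {E : Type*} [NormedAddCommGroup E] [InnerProductSpace ℝ E] {I : Finset (E × ℝ)} {x y w : E}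

def polyhedron (I : Finset (E × ℝ)) : Set E := ⋂ p ∈ I, {x | ⟪p.1, x⟫_ℝ ≤ p.2}

lemma mem_polyhedron : x ∈ polyhedron I ↔ ∀ p ∈ I, ⟪p.1, x⟫_ℝ ≤ p.2 := by
  simp [polyhedron]

variable [CompleteSpace E]

/-- `{w | ⟪a, w⟫ ≤ 0 for every constraint (a, b) ∈ I active at x}`, written as a dual cone so
that it is a `ProperCone`. -/
def activeCone (I : Finset (E × ℝ)) (x : E) : ProperCone ℝ E :=
  innerDual ((fun p => -p.1) '' {p | p ∈ I ∧ ⟪p.1, x⟫_ℝ = p.2})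

lemma mem_activeCone : w ∈ activeCone I x ↔ ∀ p ∈ I, ⟪p.1, x⟫_ℝ = p.2 → ⟪p.1, w⟫_ℝ ≤ 0 := by
  simp only [activeCone, mem_innerDual, forall_mem_image, mem_ofPred_eq, inner_neg_left, neg_nonneg,
    and_imp]

lemma sub_mem_activeCone (hy : y ∈ polyhedron I) : y - x ∈ activeCone I x := by
  refine mem_activeCone.2 fun p hp hact => ?_
  rw [inner_sub_right, hact]
  linarith [mem_polyhedron.1 hy p hp]

lemma neg_mem_normalCone_of_mem_innerDual_activeCone {d : ℕ} {I : Finset (Euc d × ℝ)}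
    {x b : Euc d} (hb : b ∈ innerDual (activeCone I x : Set (Euc d))) :
    -b ∈ normalCone (polyhedron I) x := fun y hy => by
  rw [inner_neg_left, neg_nonpos, real_inner_comm]
  exact hb (sub_mem_activeCone hy)

lemma eventually_add_smul_mem_polyhedron (hx : x ∈ polyhedron I) (hw : w ∈ activeCone I x) :
    ∀ᶠ t in 𝓝[>] (0 : ℝ), x + t • w ∈ polyhedron I := by
  simp_rw [mem_polyhedron, Filter.eventually_all_finset, inner_add_right, real_inner_smul_right]
  intro p hp
  rcases (mem_polyhedron.1 hx p hp).eq_or_lt with hact | hlt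
  · filter_upwards [self_mem_nhdsWithin] with t (ht : 0 < t)
    nlinarith [mem_activeCone.1 hw p hp hact]
  · refine (tendsto_nhdsWithin_of_tendsto_nhds ?_).eventually_le_const hlt
    simpa using (tendsto_id (x := 𝓝 (0 : ℝ))).mul_const ⟪p.1, w⟫_ℝ |>.const_add ⟪p.1, x⟫_ℝ

lemma contCone_polyhedron {d : ℕ} {I : Finset (Euc d × ℝ)} {x : Euc d}
    (hx : x ∈ polyhedron I) : contCone (polyhedron I) x = activeCone I x := by
  ext w
  constructor
  · rintro ⟨vs, ts, hvs, -, hpos, hmem⟩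
    refine mem_activeCone.2 fun p hp hact => ?_
    refine le_of_tendsto' (tendsto_const_nhds.inner hvs) fun k => ?_
    have hk := mem_polyhedron.1 (hmem k) p hp
    rw [inner_add_right, real_inner_smul_right, hact] at hk
    exact nonpos_of_mul_nonpos_right (by linarith) (hpos k)
  · exact fun hw => mem_contCone_of_tendsto tendsto_const_nhds
      (eventually_add_smul_mem_polyhedron hx hw)

end Polyhedron

section LinearizedCone

variable {ι E F : Type*} [AddCommGroup E] [AddCommGroup F] {K : Set ι} {D : ι → E → F} {C : Set F}

lemma add_mem_biInter_preimage (hC : ∀ a ∈ C, ∀ b ∈ C, a + b ∈ C)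
    (hD : ∀ z ∈ K, ∀ v₁ v₂ : E, D z (v₁ + v₂) - (D z v₁ + D z v₂) ∈ C) {v₁ v₂ : E}
    (h₁ : v₁ ∈ ⋂ z ∈ K, D z ⁻¹' C) (h₂ : v₂ ∈ ⋂ z ∈ K, D z ⁻¹' C) :
    v₁ + v₂ ∈ ⋂ z ∈ K, D z ⁻¹' C := by
  refine mem_iInter₂.2 fun z hz => ?_
  have h := hC _ (hC _ (mem_iInter₂.1 h₁ z hz) _ (mem_iInter₂.1 h₂ z hz)) _ (hD z hz v₁ v₂)
  rwa [add_sub_cancel] at h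

variable [Module ℝ E] [Module ℝ F]

lemma add_mem_of_convex_of_smul_mem (hC : Convex ℝ C)
    (hcone : ∀ c ∈ C, ∀ t : ℝ, 0 < t → t • c ∈ C) {a b : F} (ha : a ∈ C) (hb : b ∈ C) :
    a + b ∈ C := by
  have hmid := hC ha hb (by norm_num : (0 : ℝ) ≤ 1 / 2) (by norm_num : (0 : ℝ) ≤ 1 / 2)
    (by norm_num)
  simpa [smul_add, smul_smul] using hcone _ hmid 2 two_pos

lemma zero_mem_biInter_preimage (hC : (0 : F) ∈ C)
    (hD : ∀ z ∈ K, ∀ t : ℝ, 0 < t → ∀ v, D z (t • v) = t • D z v) :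
    (0 : E) ∈ ⋂ z ∈ K, D z ⁻¹' C := by
  refine mem_iInter₂.2 fun z hz => ?_
  have h := hD z hz 2 two_pos 0
  rw [smul_zero, two_smul] at h
  rwa [mem_preimage, left_eq_add.1 h]

lemma smul_mem_biInter_preimage (hC : ∀ c ∈ C, ∀ t : ℝ, 0 < t → t • c ∈ C)
    (hD : ∀ z ∈ K, ∀ t : ℝ, 0 < t → ∀ v, D z (t • v) = t • D z v) {t : ℝ} (ht : 0 < t) {v : E}
    (hv : v ∈ ⋂ z ∈ K, D z ⁻¹' C) : t • v ∈ ⋂ z ∈ K, D z ⁻¹' C := by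
  refine mem_iInter₂.2 fun z hz => ?_
  rw [mem_preimage, hD z hz t ht]
  exact hC _ (mem_iInter₂.1 hv z hz) t ht

end LinearizedCone

section Equilibria

variable {n m : ℕ} {f : Euc n → Euc n → Euc m} {C : Set (Euc m)} {K : Set (Euc n)}
  {D : Euc n → Euc n → Euc m} {xb w : Euc n}

lemma mem_contCone_equi (hxb : xb ∈ Equi f C K) (hCadd : ∀ a ∈ C, ∀ b ∈ C, a + b ∈ C)
    (hCcone : ∀ c ∈ C, ∀ t : ℝ, 0 < t → t • c ∈ C)
    (hDph : ∀ z ∈ K, ∀ t : ℝ, 0 < t → ∀ v, D z (t • v) = t • D z v)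
    (hBdiff : ∀ ε > (0:ℝ), ∃ δ > (0:ℝ), ∀ x ∈ ball xb δ, ∀ z ∈ K,
      ‖f x z - f xb z - D z (x - xb)‖ ≤ ε * ‖x - xb‖)
    (hErr : ∃ κ > (0:ℝ), ∃ δ > (0:ℝ), ∀ x ∈ ball xb δ ∩ K, ∀ r : ℝ,
      (∀ z ∈ K, infDist (f x z) C ≤ r) → infDist x (Equi f C K) ≤ κ * r)
    (hwD : ∀ z ∈ K, D z w ∈ C) (hwK : ∀ᶠ t in 𝓝[>] (0 : ℝ), xb + t • w ∈ K) :
    w ∈ contCone (Equi f C K) xb := by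
  obtain ⟨κ, hκ, δ, hδ, herr⟩ := hErr
  refine mem_contCone_of_infDist_le ⟨xb, hxb⟩ fun ε hε => ?_
  obtain ⟨δ', hδ', hB⟩ := hBdiff (ε / (κ * (‖w‖ + 1))) (by positivity)
  have hlim : Tendsto (fun t : ℝ => xb + t • w) (𝓝[>] 0) (𝓝 xb) :=
    tendsto_nhdsWithin_of_tendsto_nhds <| by
      simpa using ((tendsto_id (x := 𝓝 (0 : ℝ))).smul_const w).const_add xb
  filter_upwards [hwK, hlim.eventually (ball_mem_nhds xb hδ),
    hlim.eventually (ball_mem_nhds xb hδ'), self_mem_nhdsWithin] with t htK htδ htδ' (ht : 0 < t)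
  have hnorm : ‖(xb + t • w) - xb‖ = t * ‖w‖ := by
    rw [add_sub_cancel_left, norm_smul, Real.norm_eq_abs, abs_of_pos ht]
  have hviol : ∀ z ∈ K, infDist (f (xb + t • w) z) C ≤ ε / (κ * (‖w‖ + 1)) * (t * ‖w‖) :=
      fun z hz => by
    have hmem : f xb z + t • D z w ∈ C := hCadd _ (hxb.2 z hz) _ (hCcone _ (hwD z hz) t ht)
    calc infDist (f (xb + t • w) z) C ≤ dist (f (xb + t • w) z) (f xb z + t • D z w) :=
          infDist_le_dist_of_mem hmem
      _ = ‖f (xb + t • w) z - f xb z - D z ((xb + t • w) - xb)‖ := by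
          rw [dist_eq_norm, add_sub_cancel_left, hDph z hz t ht, sub_sub]
      _ ≤ ε / (κ * (‖w‖ + 1)) * (t * ‖w‖) := hnorm ▸ hB _ htδ' z hz
  calc infDist (xb + t • w) (Equi f C K) ≤ κ * (ε / (κ * (‖w‖ + 1)) * (t * ‖w‖)) :=
        herr _ ⟨htδ, htK⟩ _ hviol
    _ = ε * t * (‖w‖ / (‖w‖ + 1)) := by field_simp
    _ ≤ ε * t :=
        mul_le_of_le_one_right (by positivity) ((div_le_one (by positivity)).2 (by linarith))

end Equilibria

theorem refined_necessary_optimality_condition_general {n m : ℕ}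
    (f : Euc n → Euc n → Euc m) (C : Set (Euc m)) (K : Set (Euc n))
    (hCclosed : IsClosed C) (hCconvex : Convex ℝ C)
    (hCzero : (0 : Euc m) ∈ C)
    (hCcone : ∀ c ∈ C, ∀ t : ℝ, 0 < t → t • c ∈ C)
    (ϑ : Euc n → ℝ) (xb : Euc n) (hxb : xb ∈ Equi f C K)
    (hmin : ∃ U ∈ 𝓝 xb, ∀ x ∈ Equi f C K ∩ U, ϑ xb ≤ ϑ x)
    (D : Euc n → Euc n → Euc m)
    (hDcont : ∀ z ∈ K, Continuous (D z))
    (hDph : ∀ z ∈ K, ∀ t : ℝ, 0 < t → ∀ v, D z (t • v) = t • D z v)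
    (hBdiff : ∀ ε > (0:ℝ), ∃ δ > (0:ℝ), ∀ x ∈ ball xb δ, ∀ z ∈ K,
      ‖f x z - f xb z - D z (x - xb)‖ ≤ ε * ‖x - xb‖)
    (hErr : ∃ κ > (0:ℝ), ∃ δ > (0:ℝ), ∀ x ∈ ball xb δ ∩ K, ∀ r : ℝ,
      (∀ z ∈ K, infDist (f x z) C ≤ r) → infDist x (Equi f C K) ≤ κ * r)
    (hKpoly : IsPolyhedral K)
    (hconcave : ∀ z ∈ K, ∀ v₁ v₂ : Euc n, D z (v₁ + v₂) - (D z v₁ + D z v₂) ∈ C)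
    (hqc : ((⋂ z ∈ K, D z ⁻¹' C) ∩ interior (contCone K xb)).Nonempty) :
    -upperSubdiff ϑ xb ⊆ negDualCone (⋂ z ∈ K, D z ⁻¹' C) + normalCone K xb := by
  obtain ⟨I, rfl⟩ : ∃ I, K = polyhedron I := hKpoly
  have hCadd : ∀ a ∈ C, ∀ b ∈ C, a + b ∈ C := fun a ha b hb =>
    add_mem_of_convex_of_smul_mem hCconvex hCcone ha hb
  let A : ProperCone ℝ (Euc n) :=
    ⟨ConvexCone.toPointedCone
      ⟨⋂ z ∈ polyhedron I, D z ⁻¹' C, fun _ ht _ hv => smul_mem_biInter_preimage hCcone hDph ht hv,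
        fun _ h₁ _ h₂ => add_mem_biInter_preimage hCadd hconcave h₁ h₂⟩
      (zero_mem_biInter_preimage hCzero hDph),
      isClosed_biInter fun z hz => hCclosed.preimage (hDcont z hz)⟩
  let T := activeCone I xb
  have hAT : (A : Set (Euc n)) ∩ T ⊆ contCone (Equi f C (polyhedron I)) xb := fun w hw =>
    mem_contCone_equi hxb hCadd hCcone hDph hBdiff hErr (mem_iInter₂.1 hw.1)
      (eventually_add_smul_mem_polyhedron hxb.1 hw.2)
  have hlocmin : IsLocalMinOn ϑ (Equi f C (polyhedron I)) xb := by
    obtain ⟨U, hU, hUmin⟩ := hmin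
    exact Filter.mem_of_superset (inter_mem_nhdsWithin _ hU) fun x hx => hUmin x hx
  intro u hu
  obtain ⟨a, ha, b, hb, hab⟩ := innerDual_inter_subset_add A T
    (by rwa [← contCone_polyhedron hxb.1])
    (innerDual_le_innerDual hAT (upperSubdiff_subset_innerDual_contCone hlocmin hu))
  refine ⟨-a, neg_mem_negDualCone ha, -b, neg_mem_normalCone_of_mem_innerDual_activeCone hb, ?_⟩
  simp only at hab ⊢
  rw [← neg_add, hab, neg_neg]

/-- **Refined necessary optimality condition** (Corollary 4.5): with `K` polyhedral,
`C`-concave derivatives and a qualification condition, the necessary condition takes the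
form `-∂⁺ϑ(xb) ⊆ (⋂_{z∈K} (D_Bf(xb,z))⁻¹(C))° + N(xb,K)`. -/
theorem refined_necessary_optimality_condition {n m : ℕ}
    (f : Euc n → Euc n → Euc m) (C : Set (Euc m)) (K : Set (Euc n))
    (hCclosed : IsClosed C) (hCconvex : Convex ℝ C)
    (hCzero : (0 : Euc m) ∈ C)
    (hCcone : ∀ c ∈ C, ∀ t : ℝ, 0 < t → t • c ∈ C)
    (hCpointed : ∀ c ∈ C, -c ∈ C → c = 0)
    (hCnontrivial : ∃ c ∈ C, c ≠ 0)
    (hKne : K.Nonempty) (hKclosed : IsClosed K)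
    (ϑ : Euc n → ℝ) (xb : Euc n) (hxb : xb ∈ Equi f C K)
    (hcont : ∃ U ∈ 𝓝 xb, ContinuousOn ϑ U)
    (hmin : ∃ U ∈ 𝓝 xb, ∀ x ∈ Equi f C K ∩ U, ϑ xb ≤ ϑ x)
    (D : Euc n → Euc n → Euc m)
    (hDcont : ∀ z ∈ K, Continuous (D z))
    (hDph : ∀ z ∈ K, ∀ t : ℝ, 0 < t → ∀ v, D z (t • v) = t • D z v)
    (hBdiff : ∀ ε > (0:ℝ), ∃ δ > (0:ℝ), ∀ x ∈ ball xb δ, ∀ z ∈ K,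
      ‖f x z - f xb z - D z (x - xb)‖ ≤ ε * ‖x - xb‖)
    (hErr : ∃ κ > (0:ℝ), ∃ δ > (0:ℝ), ∀ x ∈ ball xb δ ∩ K, ∀ r : ℝ,
      (∀ z ∈ K, infDist (f x z) C ≤ r) → infDist x (Equi f C K) ≤ κ * r)
    (hKpoly : IsPolyhedral K)
    (hconcave : ∀ z ∈ K, ∀ v₁ v₂ : Euc n, D z (v₁ + v₂) - (D z v₁ + D z v₂) ∈ C)
    (hqc : ((⋂ z ∈ K, D z ⁻¹' C) ∩ interior (contCone K xb)).Nonempty) :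
    -upperSubdiff ϑ xb ⊆ negDualCone (⋂ z ∈ K, D z ⁻¹' C) + normalCone K xb :=
  refined_necessary_optimality_condition_general f C K hCclosed hCconvex hCzero hCcone ϑ xb hxb hmin
    D hDcont hDph hBdiff hErr hKpoly hconcave hqc
end
end

section
/- Let ϑ : ℝ^n → ℝ be locally Lipschitz around x̄ ∈ E, where E ⊆ ℝ^n. If the Dini lower directional derivative satisfies ϑ^{D−}(x̄;w) = liminf_{t↓0} (ϑ(x̄+tw) − ϑ(x̄))/t > 0 for every w ∈ T(x̄,E)\{0}, then x̄ is a strict local minimizer of ϑ on E, i.e. there is a neighborhood U of x̄ with ϑ(x̄) < ϑ(x) for all x ∈ (E ∩ U)\{x̄}. -/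
open Filter Metric Set Pointwise
open scoped InnerProductSpace Topology

noncomputable section

/-! If `xb` is not a strict local minimizer, the points `x ∈ A \ {xb}` with `ϑ x ≤ ϑ xb`
accumulate at `xb`, and by compactness of the unit sphere their directions accumulate at a unit
vector `w ∈ T(xb, A)`: there are `vₖ → w`, `tₖ ↓ 0` with `ϑ (xb + tₖ vₖ) ≤ ϑ xb`. The Lipschitz
bound moves `xb + tₖ vₖ` to `xb + tₖ w` at cost `L tₖ ‖vₖ - w‖ = o(tₖ)`, whence
`diniLower ϑ xb w ≤ 0`. -/

section ContingentCone

variable {d : ℕ}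

theorem exists_norm_eq_one_mem_contCone {S : Set (Euc d)} {x : Euc d} (hx : AccPt x (𝓟 S)) :
    ∃ w, ‖w‖ = 1 ∧ w ∈ contCone S x := by
  have hseq : ∀ k : ℕ, ∃ y ∈ ball x (1 / (k + 1)) ∩ S, y ≠ x := fun k =>
    accPt_iff_nhds.1 hx _ (ball_mem_nhds _ (by positivity))
  choose y hy hyx using hseq
  set t : ℕ → ℝ := fun k => ‖y k - x‖
  have ht : ∀ k, 0 < t k := fun k => norm_pos_iff.2 (sub_ne_zero.2 (hyx k))
  have ht0 : Tendsto t atTop (𝓝 0) :=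
    squeeze_zero (fun k => (ht k).le) (fun k => (mem_ball_iff_norm.1 (hy k).1).le)
      tendsto_one_div_add_atTop_nhds_zero_nat
  set u : ℕ → Euc d := fun k => (t k)⁻¹ • (y k - x)
  have hu : ∀ k, u k ∈ sphere (0 : Euc d) 1 := fun k => by
    simp [u, t, norm_smul, inv_mul_cancel₀ (ht k).ne']
  have hyu : ∀ k, x + t k • u k = y k := fun k => by
    simp [u, smul_smul, mul_inv_cancel₀ (ht k).ne']
  obtain ⟨w, hw, φ, hφ, huw⟩ := (isCompact_sphere (0 : Euc d) 1).tendsto_subseq hu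
  refine ⟨w, by simpa using hw, u ∘ φ, t ∘ φ, huw, ht0.comp hφ.tendsto_atTop,
    fun k => ht _, fun k => ?_⟩
  simpa [hyu] using (hy (φ k)).2

theorem diniLower_le_of_tendsto {ϑ : Euc d → ℝ} {x w : Euc d} {ts r : ℕ → ℝ} {c : ℝ}
    (hts : Tendsto ts atTop (𝓝[>] 0)) (hr : Tendsto r atTop (𝓝 c))
    (hle : ∀ᶠ k in atTop, (ϑ (x + ts k • w) - ϑ x) / ts k ≤ r k) :
    diniLower ϑ x w ≤ c := by
  set q : ℝ → EReal := fun t => (((ϑ (x + t • w) - ϑ x) / t : ℝ) : EReal)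
  calc diniLower ϑ x w ≤ liminf (q ∘ ts) atTop := by
        rw [liminf_comp]; exact liminf_le_liminf_of_le hts
    _ ≤ liminf (fun k => (r k : EReal)) atTop :=
        liminf_le_liminf (hle.mono fun k hk => EReal.coe_le_coe_iff.2 hk)
    _ = c := (EReal.tendsto_coe.2 hr).liminf_eq

theorem diniLower_nonpos_of_mem_contCone {ϑ : Euc d → ℝ} {x w : Euc d} {L : NNReal}
    {U : Set (Euc d)} (hϑ : LipschitzOnWith L ϑ U) (hU : U ∈ 𝓝 x)
    (hw : w ∈ contCone {y | ϑ y ≤ ϑ x} x) : diniLower ϑ x w ≤ 0 := by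
  obtain ⟨vs, ts, hvs, hts, hpos, hle⟩ := hw
  have hts' : Tendsto ts atTop (𝓝[>] 0) :=
    tendsto_nhdsWithin_iff.2 ⟨hts, Eventually.of_forall hpos⟩
  have hnear : ∀ {v : ℕ → Euc d}, Tendsto v atTop (𝓝 w) →
      ∀ᶠ k in atTop, x + ts k • v k ∈ U := fun hv => by
    have := tendsto_const_nhds.add (hts.smul hv) (a := x)
    rw [zero_smul, add_zero] at this
    exact this hU
  have hr : Tendsto (fun k => (L : ℝ) * ‖w - vs k‖) atTop (𝓝 0) := by
    simpa using ((tendsto_const_nhds (x := w)).sub hvs).norm.const_mul (L : ℝ)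
  refine diniLower_le_of_tendsto hts' hr ?_
  filter_upwards [hnear tendsto_const_nhds, hnear hvs] with k hwU hvU
  have hlip : ϑ (x + ts k • w) - ϑ (x + ts k • vs k) ≤ L * (ts k * ‖w - vs k‖) := by
    have := hϑ.dist_le_mul _ hwU _ hvU
    rw [dist_add_left, dist_smul₀, dist_eq_norm, Real.norm_of_nonneg (hpos k).le] at this
    exact (le_abs_self _).trans ((Real.dist_eq _ _).symm.le.trans this)
  have hdescent : ϑ (x + ts k • vs k) ≤ ϑ x := hle k
  rw [div_le_iff₀ (hpos k)]
  linarith [mul_right_comm (L : ℝ) (ts k) ‖w - vs k‖, mul_assoc (L : ℝ) (ts k) ‖w - vs k‖]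

end ContingentCone

theorem primal_sufficient_condition_general {n : ℕ}
    (ϑ : Euc n → ℝ) (A : Set (Euc n)) (xb : Euc n)
    (hlip : ∃ L : NNReal, ∃ U ∈ 𝓝 xb, LipschitzOnWith L ϑ U)
    (hpos : ∀ w ∈ contCone A xb, w ≠ 0 → 0 < diniLower ϑ xb w) :
    ∃ U ∈ 𝓝 xb, ∀ x ∈ A ∩ U, x ≠ xb → ϑ xb < ϑ x := by
  by_contra! hmin
  obtain ⟨L, U, hU, hϑ⟩ := hlip
  have hacc : AccPt xb (𝓟 (A ∩ {y | ϑ y ≤ ϑ xb})) := accPt_iff_nhds.2 fun V hV =>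
    let ⟨y, ⟨hyA, hyV⟩, hne, hle⟩ := hmin V hV
    ⟨y, ⟨hyV, hyA, hle⟩, hne⟩
  obtain ⟨w, hw1, hw⟩ := exists_norm_eq_one_mem_contCone hacc
  have hw0 : w ≠ 0 := norm_ne_zero_iff.1 (hw1 ▸ one_ne_zero)
  exact (diniLower_nonpos_of_mem_contCone hϑ hU (contCone_mono inter_subset_right xb hw)).not_gt
    (hpos w (contCone_mono inter_subset_left xb hw) hw0)

/-- **Primal sufficient optimality condition** (Lemma 4.6): if `ϑ` is locally Lipschitz
around `xb ∈ A` and its Dini lower derivative is positive on `T(xb,A) \ {0}`, then `xb` is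
a strict local minimizer of `ϑ` on `A`. -/
theorem primal_sufficient_condition {n : ℕ}
    (ϑ : Euc n → ℝ) (A : Set (Euc n)) (xb : Euc n) (hxb : xb ∈ A)
    (hlip : ∃ L : NNReal, ∃ U ∈ 𝓝 xb, LipschitzOnWith L ϑ U)
    (hpos : ∀ w ∈ contCone A xb, w ≠ 0 → 0 < diniLower ϑ xb w) :
    ∃ U ∈ 𝓝 xb, ∀ x ∈ A ∩ U, x ≠ xb → ϑ xb < ϑ x :=
  primal_sufficient_condition_general ϑ A xb hlip hpos
end
end
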